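/- arXiv:2007.09317 — 2 statements merged into one kernel-verified Lean document; each statement's English description precedes it below -/
import Mathlib

section
/- Lemma 2 (explicit AMSE for the multiple linear regression model, conditional on the missing pattern): if Zᵀ Ψ = 0, then (1/N) Σ_{i=1}^N E[((Z β̂)_i − (Z β)_i − n^{−1/2} ψ_i)²] = (1/(N n)) Ψᵀ (D R² D + I) Ψ + (σ²/N) tr(R), where β̂ := (Zᵀ D Z)⁻¹ Zᵀ u with u_i = Σ_{j=1}^{n_i} m_{ij} Y_{ij}, I is the N×N identity matrix, and tr denotes the matrix trace. -/
/-! With `R = Z (ZᵀDZ)⁻¹Zᵀ` one has `Z β̂ = R u`, so every coordinate of the error is an affine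
combination of the independent `Y i j`, and its second moment is squared bias plus variance.
Since `RDZ = Z`, the bias vector is `n^{-1/2} (RDΨ - Ψ)`; since `ZᵀΨ = 0` gives `RΨ = 0`, the
cross term of `‖RDΨ - Ψ‖²` vanishes. Since `m i j ^ 2 = m i j`, the variances add up to
`σ² tr (RDR) = σ² tr R`. -/

open Matrix MeasureTheory ProbabilityTheory

section SecondMoment

variable {Ω : Type*} [MeasurableSpace Ω] {μ : Measure Ω} {ι : Type*} [Fintype ι]

lemma variance_sum_const_mul_of_iIndepFun {Y : ι → Ω → ℝ} (hindep : iIndepFun Y μ)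
    (hY : ∀ k, MemLp (Y k) 2 μ) (a : ι → ℝ) :
    variance (fun ω => ∑ k, a k * Y k ω) μ = ∑ k, a k ^ 2 * variance (Y k) μ := by
  have hsum : (fun ω => ∑ k, a k * Y k ω) = ∑ k, fun ω => a k * Y k ω := by
    ext ω; simp only [Finset.sum_apply]
  rw [hsum, IndepFun.variance_sum (fun k _ => (hY k).const_mul (a k))
    fun i _ j _ hij => (hindep.indepFun hij).comp (measurable_const_mul (a i))
      (measurable_const_mul (a j))]
  exact Finset.sum_congr rfl fun k _ => variance_const_mul (a k) (Y k) μ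

variable [IsProbabilityMeasure μ]

lemma integral_sub_const_sq {X : Ω → ℝ} (hX : MemLp X 2 μ) (c : ℝ) :
    ∫ ω, (X ω - c) ^ 2 ∂μ = (∫ ω, X ω ∂μ - c) ^ 2 + variance X μ := by
  have hmean : ∫ ω, (X ω - c) ∂μ = ∫ ω, X ω ∂μ - c := by
    rw [integral_sub (hX.integrable one_le_two) (integrable_const c), integral_const]
    simp
  rw [← variance_sub_const hX.aestronglyMeasurable c,
    variance_eq_sub (X := fun ω => X ω - c) (hX.sub (memLp_const c)), ← hmean]
  simp only [Pi.pow_apply]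
  ring

lemma integral_sum_const_mul_sub_sq_of_iIndepFun {Y : ι → Ω → ℝ} (hindep : iIndepFun Y μ)
    (hY : ∀ k, MemLp (Y k) 2 μ) (a : ι → ℝ) (c : ℝ) :
    ∫ ω, (∑ k, a k * Y k ω - c) ^ 2 ∂μ
      = (∑ k, a k * ∫ ω, Y k ω ∂μ - c) ^ 2 + ∑ k, a k ^ 2 * variance (Y k) μ := by
  have hmem : MemLp (fun ω => ∑ k, a k * Y k ω) 2 μ :=
    memLp_finsetSum _ fun k _ => (hY k).const_mul (a k)
  rw [integral_sub_const_sq hmem, variance_sum_const_mul_of_iIndepFun hindep hY,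
    integral_finsetSum _ fun k _ => ((hY k).integrable one_le_two).const_mul (a k)]
  simp only [integral_const_mul]

lemma integral_mulVec_sum_mul_sub_sq_of_iIndepFun [DecidableEq ι] {κ : ι → Type*}
    [∀ k, Fintype (κ k)] {Y : (k : ι) → κ k → Ω → ℝ}
    (hindep : iIndepFun (fun x : Σ k, κ k => Y x.1 x.2) μ) (hY : ∀ k j, MemLp (Y k j) 2 μ)
    (ν : ι → ℝ) (hmean : ∀ k j, ∫ ω, Y k j ω ∂μ = ν k) {σ2 : ℝ}
    (hvar : ∀ k j, variance (Y k j) μ = σ2) {m : (k : ι) → κ k → ℝ}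
    (hm : ∀ k j, m k j = 0 ∨ m k j = 1) (A : Matrix ι ι ℝ) (i : ι) :
    ∫ ω, ((A *ᵥ fun k => ∑ j, m k j * Y k j ω) i - ν i) ^ 2 ∂μ
      = (((A * diagonal fun k => ∑ j, m k j) *ᵥ ν - ν) i) ^ 2
        + σ2 * ∑ k, A i k ^ 2 * ∑ j, m k j := by
  have hflat : ∀ ω, (A *ᵥ fun k => ∑ j, m k j * Y k j ω) i
      = ∑ x : Σ k, κ k, A i x.1 * m x.1 x.2 * Y x.1 x.2 ω := fun ω => by
    simp only [mulVec, dotProduct, Fintype.sum_sigma, Finset.mul_sum, mul_assoc]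
  have hm_sq : ∀ k j, m k j ^ 2 = m k j := fun k j => by
    rcases hm k j with h | h <;> simp [h]
  simp only [hflat]
  rw [integral_sum_const_mul_sub_sq_of_iIndepFun hindep (fun x => hY x.1 x.2)]
  simp only [Fintype.sum_sigma, hmean, hvar, mulVec, dotProduct, mul_diagonal, Pi.sub_apply,
    Finset.mul_sum, Finset.sum_mul, mul_pow, hm_sq, mul_comm σ2]

end SecondMoment

section MatrixIdentities

variable {n p α : Type*} [Fintype n] [Fintype p] [CommRing α]

lemma mul_inv_mul_transpose_mul_mul_self [DecidableEq p] (Z : Matrix n p α) (D : Matrix n n α)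
    (hdet : IsUnit (Zᵀ * D * Z).det) :
    Z * (Zᵀ * D * Z)⁻¹ * Zᵀ * D * Z = Z := by
  calc Z * (Zᵀ * D * Z)⁻¹ * Zᵀ * D * Z = Z * ((Zᵀ * D * Z)⁻¹ * (Zᵀ * D * Z)) := by
        simp only [Matrix.mul_assoc]
    _ = Z := by rw [nonsing_inv_mul _ hdet, Matrix.mul_one]

lemma transpose_mul_inv_mul_transpose [DecidableEq p] (Z : Matrix n p α) {D : Matrix n n α}
    (hD : Dᵀ = D) :
    (Z * (Zᵀ * D * Z)⁻¹ * Zᵀ)ᵀ = Z * (Zᵀ * D * Z)⁻¹ * Zᵀ := by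
  simp only [transpose_mul, transpose_transpose, transpose_nonsing_inv, hD, Matrix.mul_assoc]

lemma trace_mul_diagonal_mul_transpose [DecidableEq p] (A : Matrix n p α) (d : p → α) :
    (A * diagonal d * Aᵀ).trace = ∑ i, ∑ k, A i k ^ 2 * d k := by
  simp only [trace, diag_apply, mul_apply (M := A * diagonal d), mul_diagonal, transpose_apply]
  refine Finset.sum_congr rfl fun i _ => Finset.sum_congr rfl fun k _ => ?_
  ring

lemma dotProduct_mulVec_sub_self [DecidableEq n] (A : Matrix n n α) {v : n → α}
    (hv : Aᵀ *ᵥ v = 0) :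
    (A *ᵥ v - v) ⬝ᵥ (A *ᵥ v - v) = v ⬝ᵥ ((Aᵀ * A + 1) *ᵥ v) := by
  have hcross : v ⬝ᵥ (A *ᵥ v) = 0 := by
    rw [dotProduct_mulVec, ← mulVec_transpose, hv, zero_dotProduct]
  have hquad : v ⬝ᵥ ((Aᵀ * A) *ᵥ v) = (A *ᵥ v) ⬝ᵥ (A *ᵥ v) := by
    rw [← mulVec_mulVec, dotProduct_mulVec, vecMul_transpose]
  rw [add_mulVec, one_mulVec, dotProduct_add, hquad, sub_dotProduct, dotProduct_sub,
    dotProduct_sub, dotProduct_comm (A *ᵥ v) v, hcross]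
  ring

lemma sum_sq_mul_mulVec_sub_self [DecidableEq n] {R D : Matrix n n α} (hR : Rᵀ = R)
    (hD : Dᵀ = D) {v : n → α} (hv : R *ᵥ v = 0) :
    ∑ i, ((R * D) *ᵥ v - v) i ^ 2 = v ⬝ᵥ ((D * (R * R) * D + 1) *ᵥ v) := by
  have hRDt : (R * D)ᵀ = D * R := by rw [transpose_mul, hR, hD]
  calc ∑ i, ((R * D) *ᵥ v - v) i ^ 2 = ((R * D) *ᵥ v - v) ⬝ᵥ ((R * D) *ᵥ v - v) := by
        simp only [dotProduct, sq]
    _ = v ⬝ᵥ ((D * (R * R) * D + 1) *ᵥ v) := by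
        rw [dotProduct_mulVec_sub_self _ (by rw [hRDt, ← mulVec_mulVec, hv, mulVec_zero]), hRDt]
        simp only [Matrix.mul_assoc]

end MatrixIdentities

theorem stmt_10 {Ω : Type*} [MeasureSpace Ω] [IsProbabilityMeasure (ℙ : Measure Ω)]
    {N p : ℕ} (Z : Matrix (Fin N) (Fin p) ℝ)
    (ni : Fin N → ℕ) (m : (i : Fin N) → Fin (ni i) → ℝ)
    (hm : ∀ i j, m i j = 0 ∨ m i j = 1)
    (D : Matrix (Fin N) (Fin N) ℝ)
    (hD : D = Matrix.diagonal fun i => ∑ j, m i j)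
    (hdet : IsUnit (Zᵀ * D * Z).det)
    (R : Matrix (Fin N) (Fin N) ℝ)
    (hR : R = Z * (Zᵀ * D * Z)⁻¹ * Zᵀ)
    (n σ2 : ℝ) (hn : 0 < n)
    (β : Fin p → ℝ) (Ψ : Fin N → ℝ) (hΨ : Zᵀ *ᵥ Ψ = 0)
    (Y : (i : Fin N) → Fin (ni i) → Ω → ℝ)
    (hindep : iIndepFun
      (fun idx : Σ i : Fin N, Fin (ni i) => Y idx.1 idx.2) ℙ)
    (hsq : ∀ i j, MemLp (Y i j) 2 ℙ)
    (hmean : ∀ i j, ∫ ω, Y i j ω = (Z *ᵥ β) i + (Real.sqrt n)⁻¹ * Ψ i)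
    (hvar : ∀ i j, variance (Y i j) ℙ = σ2)
    (bhat : Ω → Fin p → ℝ)
    (hbhat : ∀ ω, bhat ω = ((Zᵀ * D * Z)⁻¹ * Zᵀ) *ᵥ (fun i => ∑ j, m i j * Y i j ω)) :
    (1 / N : ℝ) * ∑ i, ∫ ω, ((Z *ᵥ bhat ω) i - (Z *ᵥ β) i - (Real.sqrt n)⁻¹ * Ψ i) ^ 2
      = (1 / (N * n)) * (Ψ ⬝ᵥ ((D * (R * R) * D + 1) *ᵥ Ψ)) + (σ2 / N) * R.trace := by
  set s := (Real.sqrt n)⁻¹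
  set μ : Fin N → ℝ := Z *ᵥ β + s • Ψ
  have hDsymm : Dᵀ = D := by rw [hD, diagonal_transpose]
  have hRDZ : R * D * Z = Z := hR ▸ mul_inv_mul_transpose_mul_mul_self Z D hdet
  have hRsymm : Rᵀ = R := hR ▸ transpose_mul_inv_mul_transpose Z hDsymm
  have hRDR : R * D * R = R := by
    nth_rewrite 2 [hR]
    simp only [← Matrix.mul_assoc]
    rw [hRDZ, hR]
  have hbias : (R * D) *ᵥ μ - μ = s • ((R * D) *ᵥ Ψ - Ψ) := by
    rw [mulVec_add, mulVec_smul, mulVec_mulVec, hRDZ, smul_sub]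
    simp only [μ]
    abel
  have hcoord : ∀ i, ∫ ω, ((Z *ᵥ bhat ω) i - (Z *ᵥ β) i - s * Ψ i) ^ 2
      = n⁻¹ * ((R * D) *ᵥ Ψ - Ψ) i ^ 2 + σ2 * ∑ k, R i k ^ 2 * ∑ j, m k j := by
    intro i
    have herr : ∀ ω, (Z *ᵥ bhat ω) i - (Z *ᵥ β) i - s * Ψ i
        = (R *ᵥ fun k => ∑ j, m k j * Y k j ω) i - μ i := fun ω => by
      rw [hbhat, mulVec_mulVec, ← Matrix.mul_assoc, ← hR]
      simp only [μ, Pi.add_apply, Pi.smul_apply, smul_eq_mul]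
      ring
    have hs_sq : s ^ 2 = n⁻¹ := by rw [inv_pow, Real.sq_sqrt hn.le]
    simp only [herr]
    rw [integral_mulVec_sum_mul_sub_sq_of_iIndepFun hindep hsq μ hmean hvar hm, ← hD, hbias,
      Pi.smul_apply, smul_eq_mul, mul_pow, hs_sq]
  simp only [hcoord, Finset.sum_add_distrib, ← Finset.mul_sum]
  have hRΨ : R *ᵥ Ψ = 0 := by rw [hR, ← mulVec_mulVec, hΨ, mulVec_zero]
  rw [← trace_mul_diagonal_mul_transpose, ← hD, hRsymm, hRDR,
    sum_sq_mul_mulVec_sub_self hRsymm hDsymm hRΨ]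
  ring
end

section
/- Derivative of R(ξ,M) D_{ξM} with respect to a missing indicator (Appendix D): the map t ↦ Z (Zᵀ (D + t E) Z)⁻¹ Zᵀ (D + t E) from ℝ to N×N real matrices has derivative R E (I − R D) at t = 0, where R := Z (Zᵀ D Z)⁻¹ Zᵀ and I is the N×N identity matrix. -/
/-!
Write `A t = Zᵀ (D + t E) Z`, so that the map is `P t * (D + t E)` with `P t = Z (A t)⁻¹ Zᵀ` and
`P 0 = R`. Differentiating the inverse gives `(A⁻¹)' = -A⁻¹ (Zᵀ E Z) A⁻¹`, hence `P' = -R E R`,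
and the product rule yields `P' D + R E = R E - R E R D = R E (1 - R D)`.
-/

open Matrix

-- The ℓ∞-operator norm only gives access to the normed-ring calculus: it induces the product
-- topology, so the `HasDerivAt` statements below are about the standard topology on matrices.
attribute [local instance] Matrix.linftyOpNormedAddCommGroup Matrix.linftyOpNormedSpace
  Matrix.linftyOpNormedRing Matrix.linftyOpNormedAlgebra

section

variable {𝕜 : Type*} [RCLike 𝕜] {l m n o : Type*} [Fintype l] [Fintype m] [Fintype n] [Fintype o]
  {x : 𝕜}

theorem HasDerivAt.matrix_apply {A : 𝕜 → Matrix m n 𝕜} {A' : Matrix m n 𝕜}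
    (hA : HasDerivAt A A' x) (i : m) (j : n) :
    HasDerivAt (fun t => A t i j) (A' i j) x :=
  (LinearMap.toContinuousLinearMap (entryLinearMap 𝕜 𝕜 i j)).hasFDerivAt.comp_hasDerivAt x hA

theorem HasDerivAt.matrix_const_mul_mul_const {X : 𝕜 → Matrix m n 𝕜} {X' : Matrix m n 𝕜}
    (hX : HasDerivAt X X' x) (A : Matrix l m 𝕜) (B : Matrix n o 𝕜) :
    HasDerivAt (fun t => A * X t * B) (A * X' * B) x :=
  let L : Matrix m n 𝕜 →ₗ[𝕜] Matrix l o 𝕜 :=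
    { toFun := fun Y => A * Y * B
      map_add' := fun Y Y' => by simp only [Matrix.mul_add, Matrix.add_mul]
      map_smul' := fun c Y => by simp only [Matrix.mul_smul, Matrix.smul_mul, RingHom.id_apply] }
  (LinearMap.toContinuousLinearMap L).hasFDerivAt.comp_hasDerivAt x hX

theorem HasDerivAt.matrix_inv [DecidableEq n] {A : 𝕜 → Matrix n n 𝕜} {A' : Matrix n n 𝕜}
    (hA : HasDerivAt A A' x) (hdet : IsUnit (A x).det) :
    HasDerivAt (fun t => (A t)⁻¹) (-((A x)⁻¹ * A' * (A x)⁻¹)) x := by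
  obtain ⟨u, hu⟩ := (isUnit_iff_isUnit_det _).mpr hdet
  have h := (hu ▸ hasFDerivAt_ringInverse (𝕜 := 𝕜) u).comp_hasDerivAt x hA
  simp only [Function.comp_def, ← nonsing_inv_eq_ringInverse, FunLike.coe_neg, Pi.neg_apply,
    ContinuousLinearMap.mulLeftRight_apply, Matrix.coe_units_inv, hu] at h
  exact h

end

theorem stmt_15 {N p : ℕ} (Z : Matrix (Fin N) (Fin p) ℝ)
    (d : Fin N → ℝ) (E : Matrix (Fin N) (Fin N) ℝ)
    (hdet : IsUnit (Zᵀ * Matrix.diagonal d * Z).det)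
    (R : Matrix (Fin N) (Fin N) ℝ)
    (hR : R = Z * (Zᵀ * Matrix.diagonal d * Z)⁻¹ * Zᵀ) :
    ∀ i j : Fin N,
      HasDerivAt
        (fun t : ℝ =>
          (Z * (Zᵀ * (Matrix.diagonal d + t • E) * Z)⁻¹ * Zᵀ *
            (Matrix.diagonal d + t • E)) i j)
        ((R * E * (1 - R * Matrix.diagonal d)) i j) 0 := by
  intro i j
  set D := Matrix.diagonal d
  have hM : HasDerivAt (fun t : ℝ => D + t • E) E 0 := by
    have h := ((hasDerivAt_id (0 : ℝ)).smul_const E).const_add D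
    simp only [id_eq, one_smul] at h
    exact h
  have hX := (hM.matrix_const_mul_mul_const Zᵀ Z).matrix_inv (by simpa using hdet)
  have hP := ((hX.matrix_const_mul_mul_const Z Zᵀ).fun_mul hM).matrix_apply i j
  refine hP.congr_deriv (congrFun (congrFun ?_ i) j)
  simp only [hR, zero_smul, add_zero, Matrix.mul_sub, Matrix.mul_one, Matrix.mul_neg,
    Matrix.neg_mul, Matrix.mul_assoc]
  abel
end
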